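/- arXiv:1301.4946 — 3 statements merged into one kernel-verified Lean document; each statement's English description precedes it below -/
import Mathlib

section
/- Let G be a looped simple graph with rank function r on M(IAS(G)). Let S ⊆ W(G) be a subtransversal of size |V(G)|−1 that contains exactly one element from each canonical cell except the cell of a vertex v (so (v,φ),(v,χ),(v,ψ) ∉ S). Then among the three sets S∪{(v,φ)}, S∪{(v,χ)}, S∪{(v,ψ)}, exactly one has rank r(S) in M(IAS(G)), and the other two have rank r(S)+1. -/
/-- The three column types of the matrix `IAS(G) = (I | A | I+A)`. -/
inductive GType : Type
  | phi | chi | psi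
  deriving DecidableEq

instance instFintypeGType : Fintype GType where
  elems := {GType.phi, GType.chi, GType.psi}
  complete := by intro x; cases x <;> simp

/-- The column of `IAS(G) = (I | A(G) | I+A(G))` indexed by a ground set element of
`W(G) = V × {φ, χ, ψ}`. -/
def iasCol {V : Type} [DecidableEq V] (A : Matrix V V (ZMod 2)) : V × GType → V → ZMod 2
  | (v, GType.phi) => fun w => if w = v then 1 else 0
  | (v, GType.chi) => fun w => A w v
  | (v, GType.psi) => fun w => (if w = v then 1 else 0) + A w v

/-- Independence in the binary matroid `M(IAS(G))`: a set of ground elements is independent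
iff the corresponding columns of `IAS(G)` are linearly independent over `GF(2)`. -/
def IasIndep {V : Type} [DecidableEq V] (A : Matrix V V (ZMod 2))
    (S : Set (V × GType)) : Prop :=
  LinearIndependent (ZMod 2) (fun p : S => iasCol A p.1)

/-- A circuit of `M(IAS(G))`: a minimal dependent set. -/
def IasCircuit {V : Type} [DecidableEq V] (A : Matrix V V (ZMod 2))
    (C : Set (V × GType)) : Prop :=
  ¬ IasIndep A C ∧ ∀ D : Set (V × GType), D ⊂ C → IasIndep A D

/-- The rank of a subset of the ground set of `M(IAS(G))`: the `GF(2)`-rank of the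
corresponding set of columns of `IAS(G)`. -/
noncomputable def iasRk {V : Type} [Fintype V] [DecidableEq V] (A : Matrix V V (ZMod 2))
    (S : Set (V × GType)) : ℕ :=
  Module.finrank (ZMod 2) (Submodule.span (ZMod 2) (iasCol A '' S))

/-! Let `U` be the span of the columns of `S`. Over `GF(2)` the three columns of the cell of `v`
are `e_v`, `A e_v` and their sum, and any two of them span the third, so it suffices to show that
`e_v` and `A e_v` are not both in `U`, and that some nonzero combination `a e_v + b A e_v` is.

For the first, write `e_v = p + A q` and `A e_v = p' + A q'` with `p, q, p', q'` supported off `v`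
and `(p_w, q_w)`, `(p'_w, q'_w)` multiples of the coefficients of the chosen column at `w`. Then
`q' ⬝ A q = -(q' ⬝ p)` and `q ⬝ A q' = 1 - q ⬝ p'`; these agree by symmetry of `A` and
`q' ⬝ p = q ⬝ p'`, so `1 = 0`.

For the second, each `x ⊥ U` satisfies `a_w x_w + b_w (A x)_w = 0` with `(a_w, b_w) ≠ 0` at every
`w ≠ v`, so `x_w (A y)_w = y_w (A x)_w` there for `x, y ⊥ U`. Since `x ⬝ A y = y ⬝ A x`, the same
holds at `v`: all pairs `(x_v, (A x)_v)` with `x ⊥ U` lie on one line, and its normal `(a, b)`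
gives `a e_v + b A e_v ∈ U^⊥⊥ = U`. -/

open Matrix Submodule

theorem mul_eq_mul_of_add_mul_eq_zero {K : Type*} [CommRing K] [NoZeroDivisors K]
    {a b s t s' t' : K} (hab : a ≠ 0 ∨ b ≠ 0) (h : a * s + b * t = 0)
    (h' : a * s' + b * t' = 0) : s * t' = s' * t := by
  rw [← sub_eq_zero]
  rcases hab with ha | hb
  · have : a * (s * t' - s' * t) = 0 := by linear_combination t' * h - t * h'
    exact (mul_eq_zero.1 this).resolve_left ha
  · have : b * (s * t' - s' * t) = 0 := by linear_combination s * h' - s' * h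
    exact (mul_eq_zero.1 this).resolve_left hb

namespace Matrix

variable {K V : Type*} [Fintype V]

theorem IsSymm.vecMul_eq_mulVec [CommSemiring K] {A : Matrix V V K} (hA : A.IsSymm) (x : V → K) :
    x ᵥ* A = A *ᵥ x := by
  rw [← mulVec_transpose, hA.eq]

theorem IsSymm.dotProduct_mulVec_comm [CommSemiring K] {A : Matrix V V K} (hA : A.IsSymm)
    (x y : V → K) : x ⬝ᵥ A *ᵥ y = y ⬝ᵥ A *ᵥ x := by
  rw [dotProduct_mulVec, hA.vecMul_eq_mulVec, dotProduct_comm]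

variable [DecidableEq V]

section CommRing

variable [CommRing K] (A : Matrix V V K)

def mixedCol (w : V) (a b : K) : V → K :=
  a • Pi.single w 1 + b • A *ᵥ Pi.single w 1

def transversalSpan (α β : V → K) (v : V) : Submodule K (V → K) :=
  span K ((fun w => A.mixedCol w (α w) (β w)) '' {v}ᶜ)

variable {A}

theorem dotProduct_mixedCol (hA : A.IsSymm) (x : V → K) (w : V) (a b : K) :
    x ⬝ᵥ A.mixedCol w a b = a * x w + b * (A *ᵥ x) w := by
  rw [mixedCol, dotProduct_add, dotProduct_smul, dotProduct_smul, dotProduct_mulVec,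
    hA.vecMul_eq_mulVec, dotProduct_single_one, dotProduct_single_one, smul_eq_mul,
    smul_eq_mul]

theorem exists_eq_of_mem_transversalSpan {α β : V → K} {v : V} {x : V → K}
    (hx : x ∈ A.transversalSpan α β v) :
    ∃ c : V → K, c v = 0 ∧ x = c * α + A *ᵥ (c * β) := by
  obtain ⟨c, hc, rfl⟩ := (Finsupp.mem_span_image_iff_linearCombination K).1 hx
  refine ⟨c, Finsupp.notMem_support_iff.1 fun hv => (Finsupp.mem_supported K c).1 hc hv rfl, ?_⟩
  rw [Finsupp.linearCombination_apply, Finsupp.sum_fintype _ _ (by simp)]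
  simp only [mixedCol, smul_add, smul_smul, Finset.sum_add_distrib, ← mulVec_smul, ← mulVec_sum]
  rw [← pi_eq_sum_univ', ← pi_eq_sum_univ']
  rfl

theorem not_single_mem_and_mulVec_single_mem [Nontrivial K] (hA : A.IsSymm) (α β : V → K)
    (v : V) :
    ¬ (Pi.single v 1 ∈ A.transversalSpan α β v ∧
      A *ᵥ Pi.single v 1 ∈ A.transversalSpan α β v) := by
  rintro ⟨h₁, h₂⟩
  obtain ⟨c, hcv, hc⟩ := exists_eq_of_mem_transversalSpan h₁
  obtain ⟨c', hcv', hc'⟩ := exists_eq_of_mem_transversalSpan h₂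
  have hAc : A *ᵥ (c * β) = Pi.single v 1 - c * α := by rw [hc]; abel
  have hAc' : A *ᵥ (c' * β) = A *ᵥ Pi.single v 1 - c' * α := by rw [hc']; abel
  have key := hA.dotProduct_mulVec_comm (c' * β) (c * β)
  have hcross : (c' * β) ⬝ᵥ (c * α) = (c * β) ⬝ᵥ (c' * α) := by
    simp only [dotProduct, Pi.mul_apply]
    exact Finset.sum_congr rfl fun w _ => by ring
  have lhs : (c' * β) ⬝ᵥ A *ᵥ (c * β) = -((c' * β) ⬝ᵥ (c * α)) := by
    rw [hAc, dotProduct_sub, dotProduct_single_one, Pi.mul_apply, hcv', zero_mul, zero_sub]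
  have rhs : (c * β) ⬝ᵥ A *ᵥ (c' * β) = 1 - (c * β) ⬝ᵥ (c' * α) := by
    rw [hAc', dotProduct_sub, dotProduct_mulVec, hA.vecMul_eq_mulVec, hAc,
      dotProduct_single_one, Pi.sub_apply, Pi.single_eq_same, Pi.mul_apply, hcv, zero_mul,
      sub_zero]
  rw [lhs, rhs, hcross] at key
  exact one_ne_zero (by linear_combination -key : (1 : K) = 0)

theorem mul_mulVec_apply_eq_of_forall_ne (hA : A.IsSymm) {x y : V → K} {v : V}
    (h : ∀ w, w ≠ v → x w * (A *ᵥ y) w = y w * (A *ᵥ x) w) :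
    x v * (A *ᵥ y) v = y v * (A *ᵥ x) v := by
  have hsum := hA.dotProduct_mulVec_comm x y
  simp only [dotProduct] at hsum
  rw [Fintype.sum_eq_add_sum_compl v, Fintype.sum_eq_add_sum_compl v,
    Finset.sum_congr rfl fun w hw => h w (Finset.mem_compl.1 hw ∘ Finset.mem_singleton.2)] at hsum
  exact add_right_cancel hsum

end CommRing

section Field

variable [Field K] {A : Matrix V V K}

theorem mem_of_forall_dotProduct_eq_zero {U : Submodule K (V → K)} {z : V → K}
    (h : ∀ x : V → K, (∀ u ∈ U, x ⬝ᵥ u = 0) → x ⬝ᵥ z = 0) : z ∈ U := by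
  rw [← Subspace.forall_mem_dualAnnihilator_apply_eq_zero_iff]
  intro φ hφ
  obtain ⟨x, rfl⟩ := (dotProductEquiv K V).surjective φ
  exact h x ((mem_dualAnnihilator _).1 hφ)

theorem exists_mixedCol_mem_transversalSpan (hA : A.IsSymm) {α β : V → K} {v : V}
    (hαβ : ∀ w, w ≠ v → α w ≠ 0 ∨ β w ≠ 0) :
    ∃ a b : K, (a ≠ 0 ∨ b ≠ 0) ∧ A.mixedCol v a b ∈ A.transversalSpan α β v := by
  set U := A.transversalSpan α β v
  have hperp : ∀ x y : V → K, (∀ u ∈ U, x ⬝ᵥ u = 0) → (∀ u ∈ U, y ⬝ᵥ u = 0) →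
      x v * (A *ᵥ y) v = y v * (A *ᵥ x) v := by
    intro x y hx hy
    refine mul_mulVec_apply_eq_of_forall_ne hA fun w hw => ?_
    have hcol : A.mixedCol w (α w) (β w) ∈ U := subset_span ⟨w, hw, rfl⟩
    have hxw := hx _ hcol
    have hyw := hy _ hcol
    rw [dotProduct_mixedCol hA] at hxw hyw
    exact mul_eq_mul_of_add_mul_eq_zero (hαβ w hw) hxw hyw
  by_cases h : ∀ x : V → K, (∀ u ∈ U, x ⬝ᵥ u = 0) → x v = 0
  · refine ⟨1, 0, Or.inl one_ne_zero, mem_of_forall_dotProduct_eq_zero fun x hx => ?_⟩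
    rw [dotProduct_mixedCol hA, h x hx]
    ring
  · push Not at h
    obtain ⟨x₀, hx₀, hx₀v⟩ := h
    refine ⟨(A *ᵥ x₀) v, -x₀ v, Or.inr (neg_ne_zero.2 hx₀v),
      mem_of_forall_dotProduct_eq_zero fun x hx => ?_⟩
    rw [dotProduct_mixedCol hA]
    linear_combination -(hperp x₀ x hx₀ hx)

end Field

end Matrix

theorem exists_eq_image_compl_of_existsUnique {α β : Type*} [Nonempty β] {v : α}
    {S : Set (α × β)} (hvS : ∀ b, (v, b) ∉ S) (hS : ∀ a, a ≠ v → ∃! b, (a, b) ∈ S) :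
    ∃ σ : α → β, S = (fun a => (a, σ a)) '' {v}ᶜ := by
  have : ∀ a, ∃ b, a ≠ v → ∀ b', (a, b') ∈ S ↔ b' = b := by
    intro a
    by_cases ha : a = v
    · exact ⟨Classical.arbitrary β, fun h => (h ha).elim⟩
    · obtain ⟨b, hb, huniq⟩ := hS a ha
      exact ⟨b, fun _ b' => ⟨huniq b', fun h => h ▸ hb⟩⟩
  choose σ hσ using this
  refine ⟨σ, Set.ext fun ⟨a, b⟩ => ?_⟩
  by_cases ha : a = v
  · subst ha
    simpa using hvS b
  · simp [hσ a ha, eq_comm, Ne.symm ha]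

namespace GType

def idCoeff : GType → ZMod 2
  | phi => 1 | chi => 0 | psi => 1

def adjCoeff : GType → ZMod 2
  | phi => 0 | chi => 1 | psi => 1

theorem idCoeff_ne_zero_or_adjCoeff_ne_zero (ι : GType) : ι.idCoeff ≠ 0 ∨ ι.adjCoeff ≠ 0 := by
  cases ι <;> decide

theorem exists_idCoeff_eq_and_adjCoeff_eq {a b : ZMod 2} (hab : a ≠ 0 ∨ b ≠ 0) :
    ∃ ι : GType, ι.idCoeff = a ∧ ι.adjCoeff = b := by
  revert a b
  decide

end GType

section IAS

variable {V : Type} [Fintype V] [DecidableEq V] {A : Matrix V V (ZMod 2)}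

variable (A) in
theorem iasCol_eq_mixedCol (w : V) (ι : GType) :
    iasCol A (w, ι) = A.mixedCol w ι.idCoeff ι.adjCoeff := by
  ext u
  cases ι <;> simp [iasCol, mixedCol, GType.idCoeff, GType.adjCoeff, Pi.single_apply]

variable (A) in
theorem span_image_iasCol_eq_transversalSpan (σ : V → GType) (v : V) :
    span (ZMod 2) (iasCol A '' ((fun w => (w, σ w)) '' {v}ᶜ)) =
      A.transversalSpan (fun w => (σ w).idCoeff) (fun w => (σ w).adjCoeff) v := by
  rw [Set.image_image]
  simp only [iasCol_eq_mixedCol]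
  rfl

theorem single_mem_and_mulVec_single_mem_of_iasCol_mem {U : Submodule (ZMod 2) (V → ZMod 2)}
    {v : V} {ι κ : GType} (hικ : ι ≠ κ) (hι : iasCol A (v, ι) ∈ U) (hκ : iasCol A (v, κ) ∈ U) :
    Pi.single v 1 ∈ U ∧ A *ᵥ Pi.single v 1 ∈ U := by
  simp only [iasCol_eq_mixedCol, mixedCol] at hι hκ
  cases ι <;> cases κ <;>
    simp_all [GType.idCoeff, GType.adjCoeff, Submodule.add_mem_iff_left,
      Submodule.add_mem_iff_right]

theorem iasRk_insert_of_mem {S : Set (V × GType)} {p : V × GType}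
    (h : iasCol A p ∈ span (ZMod 2) (iasCol A '' S)) : iasRk A (insert p S) = iasRk A S := by
  rw [iasRk, Set.image_insert_eq, span_insert_eq_span h, iasRk]

theorem iasRk_insert_of_notMem {S : Set (V × GType)} {p : V × GType}
    (h : iasCol A p ∉ span (ZMod 2) (iasCol A '' S)) : iasRk A (insert p S) = iasRk A S + 1 := by
  rw [iasRk, iasRk, Set.image_insert_eq, span_insert, sup_comm]
  exact finrank_sup_span_singleton h

end IAS

/-- triangle property: if `S` is a subtransversal of `W(G)` containing
exactly one element of each canonical cell except the cell of `v` (so `|S| = |V|−1`),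
then exactly one of the three sets `S ∪ {(v,ι)}` has rank `r(S)` in `M(IAS(G))` and the
other two have rank `r(S) + 1`. -/
theorem triangle_property {V : Type} [Fintype V] [DecidableEq V]
    (A : Matrix V V (ZMod 2)) (hA : A.IsSymm) (v : V) (S : Set (V × GType))
    (hvS : ∀ ι : GType, (v, ι) ∉ S)
    (hsub : ∀ w : V, w ≠ v → ∃! ι : GType, (w, ι) ∈ S) :
    ∃ ι : GType,
      iasRk A (insert (v, ι) S) = iasRk A S ∧
      ∀ κ : GType, κ ≠ ι → iasRk A (insert (v, κ) S) = iasRk A S + 1 := by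
  have : Nonempty GType := ⟨.phi⟩
  obtain ⟨σ, rfl⟩ := exists_eq_image_compl_of_existsUnique hvS hsub
  have hU := span_image_iasCol_eq_transversalSpan A σ v
  obtain ⟨a, b, hab, hmem⟩ := exists_mixedCol_mem_transversalSpan hA
    fun w _ => (σ w).idCoeff_ne_zero_or_adjCoeff_ne_zero
  obtain ⟨ι, rfl, rfl⟩ := GType.exists_idCoeff_eq_and_adjCoeff_eq hab
  rw [← iasCol_eq_mixedCol, ← hU] at hmem
  refine ⟨ι, iasRk_insert_of_mem hmem, fun κ hκ => iasRk_insert_of_notMem fun hκmem => ?_⟩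
  exact not_single_mem_and_mulVec_single_mem hA _ _ v
    (hU ▸ single_mem_and_mulVec_single_mem_of_iasCol_mem hκ.symm hmem hκmem)
end

section
/- Let G be a looped simple graph. For each vertex v, there is exactly one transverse cycle ζ_v of G contained in {(v,χ),(v,ψ)} ∪ {(w,φ) : w ≠ v}; it satisfies: (w,φ) ∈ ζ_v iff w ∈ N(v), and (v,ψ) ∈ ζ_v iff v is looped (otherwise (v,χ) ∈ ζ_v). Consequently the set L(G) of transverse cycles determines the graph G. -/
instance : Fintype GType :=
  ⟨{GType.phi, GType.chi, GType.psi}, by intro x; cases x <;> simp⟩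

/-- A subtransversal of `W(G)` encoded as a function assigning to each vertex at most one
column type; `cycSum` is the sum of the corresponding columns of `IAS(G)`.
A transverse cycle is such an `f` with `cycSum A f = 0`. -/
def cycSum {V : Type} [Fintype V] [DecidableEq V] (A : Matrix V V (ZMod 2))
    (f : V → Option GType) : V → ZMod 2 :=
  ∑ v : V, (f v).elim 0 (fun ι => iasCol A (v, ι))

/-!
Let `f` be a subtransversal inside `{(v,χ),(v,ψ)} ∪ {(w,φ) : w ≠ v}`. Away from `v` its columns
are unit vectors `e_w`, so at a row `u ≠ v` the sum is `[f u = φ] + A u v` (both the `χ`- and the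
`ψ`-column of `v` equal `A u v` there), while at row `v` only the column chosen at `v` contributes:
`1` for `φ`, `A v v` for `χ`, `1 + A v v` for `ψ`. Hence `f` is a cycle iff it is `ζ_v`, and `ζ_v`
records column `v` of `A`, so the transverse cycles determine `A`.
-/

open Finset

lemma ZMod.two_eq_of_eq_one_iff : ∀ {a b : ZMod 2}, (a = 1 ↔ b = 1) → a = b := by decide

lemma ZMod.two_eq_zero_of_ne_one : ∀ {a : ZMod 2}, a ≠ 1 → a = 0 := by decide

section

variable {V : Type} [DecidableEq V] (A : Matrix V V (ZMod 2))

/-- The subtransversals contained in `{(v,χ),(v,ψ)} ∪ {(w,φ) : w ≠ v}`. -/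
def PhiAwayFrom (v : V) (f : V → Option GType) : Prop :=
  ∀ w, w ≠ v → f w = none ∨ f w = some GType.phi

/-- The transverse cycle `ζ_v` of the paper. -/
def zeta (v : V) : V → Option GType := fun w =>
  if w = v then (if A v v = 1 then some GType.psi else some GType.chi)
  else if A w v = 1 then some GType.phi else none

variable {A}

lemma zeta_apply_eq_phi {v w : V} (hw : w ≠ v) : zeta A v w = some GType.phi ↔ A w v = 1 := by
  by_cases h : A w v = 1 <;> simp [zeta, hw, h]

lemma zeta_self_eq_psi (v : V) : zeta A v v = some GType.psi ↔ A v v = 1 := by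
  by_cases h : A v v = 1 <;> simp [zeta, h]

lemma zeta_self_eq_chi (v : V) : zeta A v v = some GType.chi ↔ A v v = 0 := by
  by_cases h : A v v = 1 <;> simp [zeta, h, ZMod.two_eq_zero_of_ne_one]

variable (A) in
lemma zeta_self_ne_none (v : V) : zeta A v v ≠ none := by
  by_cases h : A v v = 1 <;> simp [zeta, h]

variable (A) in
lemma phiAwayFrom_zeta (v : V) : PhiAwayFrom v (zeta A v) := by
  intro w hw
  by_cases h : A w v = 1 <;> simp [zeta, hw, h]

lemma zeta_injective : Function.Injective (zeta (V := V)) := by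
  intro A B h
  ext u v
  have huv := congrFun (congrFun h v) u
  refine ZMod.two_eq_of_eq_one_iff ?_
  by_cases hu : u = v
  · subst hu
    rw [← zeta_self_eq_psi, ← zeta_self_eq_psi, huv]
  · rw [← zeta_apply_eq_phi hu, ← zeta_apply_eq_phi hu, huv]

end

section

variable {V : Type} [Fintype V] [DecidableEq V] {A : Matrix V V (ZMod 2)}

lemma cycSum_apply_of_phiAwayFrom {v : V} {f : V → Option GType} (hf : PhiAwayFrom v f)
    (u : V) :
    cycSum A f u = (if u ≠ v ∧ f u = some GType.phi then 1 else 0)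
      + (f v).elim 0 (fun ι => iasCol A (v, ι)) u := by
  have hoff : ∀ w ∈ univ.erase v, (f w).elim 0 (fun ι => iasCol A (w, ι)) u
      = if u = w then (if f w = some GType.phi then 1 else 0) else 0 := by
    intro w hw
    rcases hf w (ne_of_mem_erase hw) with h | h <;> by_cases huw : u = w <;> simp [h, huw, iasCol]
  rw [cycSum, Finset.sum_apply, ← add_sum_erase _ _ (mem_univ v), add_comm, sum_congr rfl hoff,
    sum_ite_eq]
  simp only [mem_erase, mem_univ, and_true]
  split_ifs <;> simp_all

variable (A) in
lemma cycSum_zeta (v : V) : cycSum A (zeta A v) = 0 := by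
  funext u
  rw [cycSum_apply_of_phiAwayFrom (phiAwayFrom_zeta A v)]
  by_cases hu : u = v
  · subst hu
    by_cases h : A u u = 1 <;> simp [zeta, h, iasCol, ZMod.two_eq_zero_of_ne_one]
  · by_cases h : A u v = 1 <;> by_cases h' : A v v = 1 <;>
      simp [zeta, h, h', hu, iasCol, ZMod.two_eq_zero_of_ne_one]

lemma eq_zeta_of_cycSum_eq_zero {v : V} {f : V → Option GType} (h0 : cycSum A f = 0)
    (hv : f v ≠ none) (hf : PhiAwayFrom v f) : f = zeta A v := by
  have hcol (u : V) := congrFun h0 u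
  simp only [cycSum_apply_of_phiAwayFrom hf, Pi.zero_apply] at hcol
  obtain ⟨ι, hι⟩ := Option.ne_none_iff_exists'.mp hv
  have hself : f v = zeta A v v := by
    have := hcol v
    cases ι <;> by_cases h : A v v = 1 <;> simp_all [zeta, iasCol, ZMod.two_eq_zero_of_ne_one]
  have hcol_off {u : V} (hu : u ≠ v) : (f v).elim 0 (fun ι => iasCol A (v, ι)) u = A u v := by
    cases ι <;> by_cases h : A v v = 1 <;> simp_all [zeta, iasCol]
  funext u
  by_cases hu : u = v
  · exact hu ▸ hself
  · have := CharTwo.add_eq_zero.mp (hcol u)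
    rw [hcol_off hu] at this
    rcases hf u hu with h | h <;> simp [zeta, hu, h, ← this]

end

theorem transverse_cycle_determines_graph_general {V : Type} [Fintype V] [DecidableEq V]
    (A : Matrix V V (ZMod 2)) :
    (∀ v : V,
      ∃! f : V → Option GType,
        cycSum A f = 0 ∧ f v ≠ none ∧
          (∀ w, w ≠ v → (f w = none ∨ f w = some GType.phi))) ∧
    (∀ (v : V) (f : V → Option GType),
      cycSum A f = 0 → f v ≠ none →
        (∀ w, w ≠ v → (f w = none ∨ f w = some GType.phi)) →
        ((∀ w, w ≠ v → (f w = some GType.phi ↔ A w v = 1)) ∧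
          (f v = some GType.psi ↔ A v v = 1) ∧
          (f v = some GType.chi ↔ A v v = 0))) ∧
    (∀ B : Matrix V V (ZMod 2), B.IsSymm →
      {f : V → Option GType | cycSum A f = 0} =
        {f : V → Option GType | cycSum B f = 0} →
      A = B) := by
  refine ⟨fun v => ⟨zeta A v, ⟨cycSum_zeta A v, zeta_self_ne_none A v, phiAwayFrom_zeta A v⟩,
    fun f hf => eq_zeta_of_cycSum_eq_zero hf.1 hf.2.1 hf.2.2⟩, ?_, ?_⟩
  · intro v f h0 hv hf
    obtain rfl := eq_zeta_of_cycSum_eq_zero h0 hv hf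
    exact ⟨fun w => zeta_apply_eq_phi, zeta_self_eq_psi v, zeta_self_eq_chi v⟩
  · intro B _ hcycles
    refine zeta_injective (funext fun v => eq_zeta_of_cycSum_eq_zero ?_ (zeta_self_ne_none A v)
      (phiAwayFrom_zeta A v))
    exact (Set.ext_iff.mp hcycles _).mp (cycSum_zeta A v)

/-- for each vertex `v` there is exactly one (nonempty at `v`) transverse
cycle `ζ_v` contained in `{(v,χ),(v,ψ)} ∪ {(w,φ) : w ≠ v}`; it satisfies
`(w,φ) ∈ ζ_v ↔ w ∈ N(v)` and `(v,ψ) ∈ ζ_v ↔ v` is looped (otherwise `(v,χ) ∈ ζ_v`).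
Consequently the set of transverse cycles determines the graph `G`. -/
theorem transverse_cycle_determines_graph {V : Type} [Fintype V] [DecidableEq V]
    (A : Matrix V V (ZMod 2)) (hA : A.IsSymm) :
    (∀ v : V,
      ∃! f : V → Option GType,
        cycSum A f = 0 ∧ f v ≠ none ∧
          (∀ w, w ≠ v → (f w = none ∨ f w = some GType.phi))) ∧
    (∀ (v : V) (f : V → Option GType),
      cycSum A f = 0 → f v ≠ none →
        (∀ w, w ≠ v → (f w = none ∨ f w = some GType.phi)) →
        ((∀ w, w ≠ v → (f w = some GType.phi ↔ A w v = 1)) ∧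
          (f v = some GType.psi ↔ A v v = 1) ∧
          (f v = some GType.chi ↔ A v v = 0))) ∧
    (∀ B : Matrix V V (ZMod 2), B.IsSymm →
      {f : V → Option GType | cycSum A f = 0} =
        {f : V → Option GType | cycSum B f = 0} →
      A = B) :=
  transverse_cycle_determines_graph_general A
end

section
/- Let G be a looped simple graph all of whose connected components have at most two vertices. Then M(IAS(G)) is a regular matroid. Conversely, if G has a connected component with at least three vertices, then M(IAS(G)) has a minor isomorphic to the Fano matroid F₇ and hence is not regular. -/
/-- Adjacency in the looped simple graph with adjacency matrix `A` (loops do not count). -/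
def GAdj {V : Type} (A : Matrix V V (ZMod 2)) (v w : V) : Prop :=
  v ≠ w ∧ A v w = 1

/-- The binary matroid represented by the columns `cols` is regular: it is representable
over every field (with the same independent sets). -/
def IsRegularRep {W V : Type} (cols : W → V → ZMod 2) : Prop :=
  ∀ (K : Type) [Field K], ∃ c : W → V → K,
    ∀ S : Set W,
      LinearIndependent K (fun p : S => c p.1) ↔
        LinearIndependent (ZMod 2) (fun p : S => cols p.1)

/-- The columns of the Fano matroid `F₇`: all seven nonzero vectors of `GF(2)³`
(the binary expansion of `i + 1`). -/
def fanoCol (i : Fin 7) (j : Fin 3) : ZMod 2 :=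
  ((((i : ℕ) + 1) / 2 ^ (j : ℕ)) % 2 : ℕ)

/-- The binary matroid represented by `cols` has a minor isomorphic to the Fano matroid:
after contracting a set `C` (i.e. passing to the quotient by the span of its columns),
seven of the remaining elements represent `F₇`. -/
def HasFanoMinorRep {W V : Type} [Fintype V] (cols : W → V → ZMod 2) : Prop :=
  ∃ (C : Set W) (e : Fin 7 → W), Function.Injective e ∧ (∀ i, e i ∉ C) ∧
    ∀ S : Set (Fin 7),
      LinearIndependent (ZMod 2) (fun p : S => fanoCol p.1) ↔
        LinearIndependent (ZMod 2)
          (fun p : S =>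
            (Submodule.span (ZMod 2) (cols '' C)).mkQ (cols (e p.1)))


/-!
Every column of `IAS(G)` has entries `0, 1` and is supported on the component of its vertex.
If components have at most two vertices `u, v`, the columns over a component are among
`0, e_u, e_v, e_u + e_v`, and over every field a family of such vectors is independent iff its
members are nonzero, distinct and at most two; so reading the entries in any field represents
the same matroid.

A component with three vertices contains a path `x - y - z`. Contracting the `φ`-elements of all
other vertices projects onto the coordinates `x, y, z`, where the columns of `IAS(G)` take all
seven nonzero values: a Fano minor. A representation of a matroid over a field induces one of each
minor, and `F₇` has none over a field of characteristic `≠ 2`, so `M(IAS(G))` is not regular.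
-/

open Function Submodule

theorem linearIndependent_iff_forall_linearIndepOn_fiber {ι V B R : Type*} [Ring R]
    {f : ι → V → R} (π : V → B) (s : ι → B) (hsupp : ∀ i w, f i w ≠ 0 → π w = s i) :
    LinearIndependent R f ↔ ∀ b, LinearIndepOn R f (s ⁻¹' {b}) := by
  classical
  refine ⟨fun hf b => hf.linearIndepOn _, fun hfib => linearIndependent_iff'.2 ?_⟩
  intro t g hsum i hi
  have hvanish : ∀ j w, π w ≠ s j → f j w = 0 := fun j w h => by_contra (h ∘ hsupp j w)
  have hfiber : ∑ j ∈ t.filter (s · = s i), g j • f j = 0 := by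
    funext w
    have hw := congrFun hsum w
    simp only [Finset.sum_apply, Pi.smul_apply, smul_eq_mul, Finset.sum_filter,
      Pi.zero_apply] at hw ⊢
    by_cases hwi : π w = s i
    · refine (Finset.sum_congr rfl fun j _ => ?_).trans hw
      split_ifs with hj
      · rfl
      · rw [hvanish j w (hwi ▸ Ne.symm hj), mul_zero]
    · refine Finset.sum_eq_zero fun j _ => ?_
      split_ifs with hj
      · rw [hvanish j w (hj ▸ hwi), mul_zero]
      · rfl
  exact linearIndepOn_iff'.1 (hfib (s i)) _ g (fun j hj => (Finset.mem_filter.1 hj).2) hfiber i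
    (Finset.mem_filter.2 ⟨hi, rfl⟩)

section ZeroOneVectors

variable {V F : Type*} [Field F]

theorem linearIndependent_pair_of_apply {x y : V → F} {w : V} (hxw : x w = 1) (hyw : y w = 0)
    (hy : y ≠ 0) : LinearIndependent F ![x, y] := by
  refine LinearIndependent.pair_iff.2 fun s t hst => ?_
  have hs : s = 0 := by simpa [hxw, hyw] using congrFun hst w
  subst hs
  exact ⟨rfl, (smul_eq_zero.1 (by simpa using hst)).resolve_right hy⟩

theorem linearIndependent_pair_of_zero_one {x y : V → F} (hx : ∀ w, x w = 0 ∨ x w = 1)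
    (hy : ∀ w, y w = 0 ∨ y w = 1) (hx0 : x ≠ 0) (hy0 : y ≠ 0) (hxy : x ≠ y) :
    LinearIndependent F ![x, y] := by
  obtain ⟨w, hw⟩ := Function.ne_iff.1 hxy
  rcases hx w with hxw | hxw <;> rcases hy w with hyw | hyw
  · exact absurd (hxw.trans hyw.symm) hw
  · exact LinearIndependent.pair_symm_iff.1 (linearIndependent_pair_of_apply hyw hxw hx0)
  · exact linearIndependent_pair_of_apply hxw hyw hy0
  · exact absurd (hxw.trans hyw.symm) hw

theorem LinearIndependent.card_le_of_support_subset {ι : Type*} [Fintype ι] {f : ι → V → F}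
    (hf : LinearIndependent F f) {B : Set V} [Finite B] (hB : ∀ i, ∀ w ∉ B, f i w = 0) :
    Fintype.card ι ≤ Nat.card B := by
  have : Fintype B := Fintype.ofFinite B
  let restrict := LinearMap.funLeft F F ((↑) : B → V)
  have hdisj : Disjoint (span F (Set.range f)) (LinearMap.ker restrict) := by
    have hspan : span F (Set.range f) ≤ Submodule.pi Bᶜ fun _ => ⊥ :=
      span_le.2 <| Set.range_subset_iff.2 fun i w hw => hB i w hw
    refine Submodule.disjoint_def.2 fun x hx hker => funext fun w => ?_
    by_cases hw : w ∈ B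
    · exact congrFun (LinearMap.mem_ker.1 hker) ⟨w, hw⟩
    · exact hspan hx w hw
  simpa [Nat.card_eq_fintype_card] using (hf.map hdisj).fintype_card_le_finrank

theorem linearIndependent_iff_of_zero_one {ι : Type*} {f : ι → V → F}
    (h01 : ∀ i w, f i w = 0 ∨ f i w = 1) {B : Set V} [Finite B] (hB : Nat.card B ≤ 2)
    (hsupp : ∀ i, ∀ w ∉ B, f i w = 0) :
    LinearIndependent F f ↔
      (∀ i, f i ≠ 0) ∧ Injective f ∧ ∀ i j k : ι, i = j ∨ i = k ∨ j = k := by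
  refine ⟨fun hf => ⟨hf.ne_zero, hf.injective, fun i j k => ?_⟩, ?_⟩
  · by_contra! hijk
    have hinj : Injective ![i, j, k] := by
      intro a b
      fin_cases a <;> fin_cases b <;> simp_all [eq_comm]
    have := (hf.comp _ hinj).card_le_of_support_subset fun _ => hsupp _
    rw [Fintype.card_fin] at this
    omega
  · rintro ⟨hne, hinj, hcard⟩
    rcases subsingleton_or_nontrivial ι with hι | hι
    · rcases isEmpty_or_nonempty ι with hι' | ⟨⟨i⟩⟩
      · exact linearIndependent_empty_type
      · exact LinearIndependent.of_subsingleton i (hne i)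
    · obtain ⟨i, j, hij⟩ := exists_pair_ne ι
      have huniv : (Set.univ : Set ι) = {i, j} := by
        ext k
        rcases hcard i j k with h | h | h <;> simp_all [eq_comm]
      rw [← linearIndepOn_univ_iff, huniv, LinearIndepOn.pair_iff _ hij,
        ← LinearIndependent.pair_iff]
      exact linearIndependent_pair_of_zero_one (h01 i) (h01 j) (hne i) (hne j) (hinj.ne hij)

end ZeroOneVectors

theorem ZMod.two_eq_zero_or_one : ∀ a : ZMod 2, a = 0 ∨ a = 1 := by
  decide

section NatCastVal

variable (K : Type*) [AddMonoidWithOne K]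

theorem ZMod.natCast_val_two_eq_zero_or_one (a : ZMod 2) :
    (a.val : K) = 0 ∨ (a.val : K) = 1 := by
  rcases ZMod.two_eq_zero_or_one a with rfl | rfl
  · exact Or.inl (by rw [ZMod.val_zero, Nat.cast_zero])
  · exact Or.inr (by rw [ZMod.val_one, Nat.cast_one])

theorem ZMod.natCast_val_two_injective [NeZero (1 : K)] :
    Injective fun a : ZMod 2 => (a.val : K) := by
  intro a b h
  rcases ZMod.two_eq_zero_or_one a with rfl | rfl <;>
    rcases ZMod.two_eq_zero_or_one b with rfl | rfl <;>
    simp_all [ZMod.val_one]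

end NatCastVal

theorem linearIndependent_natCast_val_iff {ι V B : Type*} [Finite V] (K : Type*) [Field K]
    (π : V → B) (hπ : ∀ b, Nat.card (π ⁻¹' {b}) ≤ 2) (s : ι → B) (g : ι → V → ZMod 2)
    (hsupp : ∀ i w, g i w ≠ 0 → π w = s i) :
    LinearIndependent K (fun i w => ((g i w).val : K)) ↔ LinearIndependent (ZMod 2) g := by
  have hcast := ZMod.natCast_val_two_injective K
  have hcast_zero : ∀ x : V → ZMod 2, (fun w => ((x w).val : K)) = 0 ↔ x = 0 := fun x =>
    hcast.comp_left.eq_iff' (by ext; simp)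
  have hsuppK : ∀ i w, ((g i w).val : K) ≠ 0 → π w = s i := fun i w h =>
    hsupp i w fun h0 => h (by simp [h0])
  rw [linearIndependent_iff_forall_linearIndepOn_fiber π s hsuppK,
    linearIndependent_iff_forall_linearIndepOn_fiber π s hsupp]
  refine forall_congr' fun b => ?_
  have hvanish : ∀ i : s ⁻¹' {b}, ∀ w ∉ π ⁻¹' {b}, g i w = 0 := fun i w hw =>
    by_contra fun h => hw ((hsupp i w h).trans i.2)
  rw [LinearIndepOn, LinearIndepOn,
    linearIndependent_iff_of_zero_one (fun i w => ZMod.natCast_val_two_eq_zero_or_one K _)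
      (hπ b) fun i w hw => by simp [hvanish i w hw],
    linearIndependent_iff_of_zero_one (fun i w => ZMod.two_eq_zero_or_one _) (hπ b) hvanish]
  exact and_congr (forall_congr' fun i => not_congr (hcast_zero _))
    (and_congr (Injective.of_comp_iff hcast.comp_left _) Iff.rfl)

theorem Set.exists_mem_ne_ne_of_three_le_ncard {α : Type*} {s : Set α} (hs : 3 ≤ s.ncard)
    (a b : α) : ∃ z ∈ s, z ≠ a ∧ z ≠ b := by
  have hab : ({a, b} : Set α).ncard < s.ncard :=
    (Set.ncard_insert_le a {b}).trans_lt (by rw [Set.ncard_singleton]; omega)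
  obtain ⟨z, hz, hzab⟩ := Set.exists_mem_notMem_of_ncard_lt_ncard hab
  exact ⟨z, hz, by simpa [not_or] using hzab⟩

theorem SimpleGraph.exists_adj_adj_of_three_le_ncard_supp {V : Type*} {G : SimpleGraph V}
    {v : V} (hv : 3 ≤ (G.connectedComponentMk v).supp.ncard) :
    ∃ x y z, x ≠ z ∧ G.Adj x y ∧ G.Adj y z := by
  have walk_to : ∀ {w}, w ∈ (G.connectedComponentMk v).supp → G.Walk v w := fun hw =>
    (ConnectedComponent.exact hw).symm.some
  obtain ⟨u, hu, huv, -⟩ := Set.exists_mem_ne_ne_of_three_le_ncard hv v v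
  obtain ⟨d, -, hd, -⟩ := (walk_to hu).exists_boundary_dart {v} rfl huv
  obtain ⟨z, hz, hzv, hzd⟩ := Set.exists_mem_ne_ne_of_three_le_ncard hv v d.snd
  obtain ⟨d', -, hd', hd'snd⟩ :=
    (walk_to hz).exists_boundary_dart {v, d.snd} (Or.inl rfl) (by simp [hzv, hzd])
  simp only [Set.mem_insert_iff, Set.mem_singleton_iff, not_or] at hd hd' hd'snd
  rcases hd' with hd' | hd'
  · exact ⟨d.snd, v, d'.snd, Ne.symm hd'snd.2, hd ▸ d.adj.symm, hd' ▸ d'.adj⟩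
  · exact ⟨v, d.snd, d'.snd, Ne.symm hd'snd.1, hd ▸ d.adj, hd' ▸ d'.adj⟩

section Contraction

variable {W ι M N K L : Type*} [DivisionRing K] [DivisionRing L] [AddCommGroup M] [Module K M]
  [AddCommGroup N] [Module L N]

theorem linearIndepOn_mkQ_comp_iff_union {f : W → M} {B : Set W} (hB : LinearIndepOn K f B)
    {e : ι → W} (he : Injective e) (heB : ∀ i, e i ∉ B) (S : Set ι) :
    LinearIndepOn K ((span K (f '' B)).mkQ ∘ f ∘ e) S ↔ LinearIndepOn K f (B ∪ e '' S) := by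
  have hdisj : Disjoint B (e '' S) :=
    Set.disjoint_left.2 fun w hwB ⟨i, _, hi⟩ => heB i (hi ▸ hwB)
  rw [← hB.quotient_iff_union hdisj]
  exact ⟨fun h => h.image_of_comp e _, fun h => h.comp_of_image he.injOn⟩

theorem span_image_eq_of_forall_not_linearIndepOn_insert {f : W → M} {B C : Set W}
    (hBC : B ⊆ C) (hB : LinearIndepOn K f B)
    (hmax : ∀ w ∈ C, w ∉ B → ¬ LinearIndepOn K f (insert w B)) :
    span K (f '' C) = span K (f '' B) := by
  refine le_antisymm (span_le.2 ?_) (span_mono (Set.image_mono hBC))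
  rintro _ ⟨w, hwC, rfl⟩
  by_cases hwB : w ∈ B
  · exact subset_span ⟨w, hwB, rfl⟩
  · by_contra hw
    exact hmax w hwC hwB ((linearIndepOn_insert hwB).2 ⟨hB, hw⟩)

/-- Contracting `C` is contracting a basis `B` of `C`, and both representations agree on the
independence of `B ∪ e '' S`. -/
theorem linearIndepOn_mkQ_comp_iff_of_forall_linearIndepOn_iff {c : W → M} {d : W → N}
    (hcd : ∀ S, LinearIndepOn K c S ↔ LinearIndepOn L d S) {C : Set W} {e : ι → W}
    (he : Injective e) (heC : ∀ i, e i ∉ C) (S : Set ι) :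
    LinearIndepOn K ((span K (c '' C)).mkQ ∘ c ∘ e) S ↔
      LinearIndepOn L ((span L (d '' C)).mkQ ∘ d ∘ e) S := by
  obtain ⟨B, hBC, -, hdC, hdB⟩ :=
    exists_linearIndepOn_extension (linearIndepOn_empty L d) (Set.empty_subset C)
  have hdmax : ∀ w ∈ C, w ∉ B → ¬ LinearIndepOn L d (insert w B) := fun w hw hwB h =>
    ((linearIndepOn_insert hwB).1 h).2 (hdC ⟨w, hw, rfl⟩)
  have hcB := (hcd B).2 hdB
  have heB : ∀ i, e i ∉ B := fun i hi => heC i (hBC hi)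
  rw [span_image_eq_of_forall_not_linearIndepOn_insert hBC hcB
      fun w hw hwB h => hdmax w hw hwB ((hcd _).1 h),
    span_image_eq_of_forall_not_linearIndepOn_insert hBC hdB hdmax,
    linearIndepOn_mkQ_comp_iff_union hcB he heB, linearIndepOn_mkQ_comp_iff_union hdB he heB, hcd]

end Contraction

@[simp]
theorem Matrix.comp_vecCons {α β : Type*} {n : ℕ} (f : α → β) (a : α) (v : Fin n → α) :
    f ∘ vecCons a v = vecCons (f a) (f ∘ v) :=
  Fin.comp_cons f a v

@[simp]
theorem Matrix.comp_vecEmpty {α β : Type*} (f : α → β) : f ∘ (![] : Fin 0 → α) = ![] :=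
  empty_eq _

section Fano

variable {K M : Type*} [Field K] [AddCommGroup M] [Module K M]

theorem exists_smul_add_smul_eq_of_not_linearIndependent {x y z : M}
    (hxy : LinearIndependent K ![x, y]) (hxz : LinearIndependent K ![x, z])
    (hyz : LinearIndependent K ![y, z]) (h : ¬ LinearIndependent K ![z, x, y]) :
    ∃ a b : K, a ≠ 0 ∧ b ≠ 0 ∧ a • x + b • y = z := by
  have hz : z ∈ span K (Set.range ![x, y]) := by
    by_contra hz
    exact h (linearIndependent_finCons.2 ⟨hxy, hz⟩)
  obtain ⟨c, hc⟩ := (mem_span_range_iff_exists_fun K).1 hz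
  obtain ⟨a, b, hab⟩ : ∃ a b : K, a • x + b • y = z :=
    ⟨c 0, c 1, by simpa [Fin.sum_univ_two] using hc⟩
  refine ⟨a, b, fun ha => ?_, fun hb => ?_, hab⟩
  · have := (LinearIndependent.pair_iff.1 hyz b (-1) (by simp [← hab, ha])).2
    exact one_ne_zero (neg_eq_zero.1 this)
  · have := (LinearIndependent.pair_iff.1 hxz a (-1) (by simp [← hab, hb])).2
    exact one_ne_zero (neg_eq_zero.1 this)

theorem fanoCol_injective : Injective fanoCol := by
  decide

theorem fanoCol_linearIndependent_pair {i j : Fin 7} (hij : i ≠ j) :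
    LinearIndependent (ZMod 2) ![fanoCol i, fanoCol j] := by
  rw [LinearIndependent.pair_iff]
  revert i j
  decide

theorem ne_and_ne_and_ne_of_fanoCol_add_eq {i j k : Fin 7}
    (h : fanoCol i + fanoCol j = fanoCol k) : i ≠ j ∧ i ≠ k ∧ j ≠ k := by
  revert i j k
  decide

theorem not_linearIndependent_fanoCol_of_add_eq {i j k : Fin 7}
    (h : fanoCol i + fanoCol j = fanoCol k) :
    ¬ LinearIndependent (ZMod 2) ![fanoCol k, fanoCol i, fanoCol j] := fun hli =>
  (linearIndependent_finCons.1 hli).2 <| h ▸ add_mem (subset_span (by simp)) (subset_span (by simp))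

theorem fanoCol_linearIndependent_013 :
    LinearIndependent (ZMod 2) ![fanoCol 0, fanoCol 1, fanoCol 3] := by
  rw [Fintype.linearIndependent_iff]
  decide

theorem not_forall_linearIndepOn_iff_fanoCol (hchar : (2 : K) ≠ 0) (u : Fin 7 → M) :
    ¬ ∀ S, LinearIndepOn K u S ↔ LinearIndepOn (ZMod 2) fanoCol S := by
  intro hrep
  have hcomp : ∀ {n} (g : Fin n → Fin 7), Injective g →
      (LinearIndependent K (u ∘ g) ↔ LinearIndependent (ZMod 2) (fanoCol ∘ g)) := fun g hg => by
    rw [← linearIndepOn_range_iff hg, ← linearIndepOn_range_iff hg]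
    exact hrep _
  have pair : ∀ {i j}, i ≠ j → LinearIndependent K ![u i, u j] := fun {i j} hij => by
    have hg : Injective ![i, j] := by
      intro a b
      fin_cases a <;> fin_cases b <;> simp [hij, hij.symm]
    simpa using (hcomp _ hg).2 (by simpa using fanoCol_linearIndependent_pair hij)
  have line : ∀ i j k, fanoCol i + fanoCol j = fanoCol k →
      ∃ a b : K, a ≠ 0 ∧ b ≠ 0 ∧ a • u i + b • u j = u k := fun i j k h => by
    obtain ⟨hij, hik, hjk⟩ := ne_and_ne_and_ne_of_fanoCol_add_eq h
    have hg : Injective ![k, i, j] := by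
      intro a b
      fin_cases a <;> fin_cases b <;> simp [hij, hik, hjk, hij.symm, hik.symm, hjk.symm]
    refine exists_smul_add_smul_eq_of_not_linearIndependent (pair hij) (pair hik) (pair hjk) ?_
    simpa using mt (hcomp _ hg).1 (by simpa using not_linearIndependent_fanoCol_of_add_eq h)
  have coords : ∀ a b c : K, a • u 0 + b • u 1 + c • u 3 = 0 → a = 0 ∧ b = 0 ∧ c = 0 := by
    have hbasis : LinearIndependent K ![u 0, u 1, u 3] := by
      simpa using (hcomp ![0, 1, 3] (by decide)).2 (by simpa using fanoCol_linearIndependent_013)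
    intro a b c h
    have := Fintype.linearIndependent_iff.1 hbasis ![a, b, c] (by simpa [Fin.sum_univ_three])
    exact ⟨this 0, this 1, this 2⟩
  obtain ⟨α₁, β₁, -, hβ₁, h2⟩ := line 0 1 2 (by decide)
  obtain ⟨α₂, β₂, hα₂, hβ₂, h4⟩ := line 0 3 4 (by decide)
  obtain ⟨α₃, β₃, -, -, h5⟩ := line 1 3 5 (by decide)
  obtain ⟨α₄, β₄, -, -, h6⟩ := line 2 3 6 (by decide)
  obtain ⟨α₅, β₅, -, hβ₅, h6'⟩ := line 0 5 6 (by decide)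
  obtain ⟨α₆, β₆, -, -, h6''⟩ := line 1 4 6 (by decide)
  obtain ⟨α₇, β₇, -, hβ₇, h5'⟩ := line 2 4 5 (by decide)
  -- coordinates in the basis `u 0, u 1, u 3` of `u 6` and of `u 5`, computed along two lines each
  obtain ⟨-, e12, e13⟩ := coords (α₄ * α₁ - α₅) (α₄ * β₁ - β₅ * α₃) (β₄ - β₅ * β₃)
    (by linear_combination (norm := module) α₄ • h2 + h6 - h6' - β₅ • h5)
  obtain ⟨e21, -, e23⟩ := coords (α₄ * α₁ - β₆ * α₂) (α₄ * β₁ - α₆) (β₄ - β₆ * β₂)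
    (by linear_combination (norm := module) α₄ • h2 + h6 - h6'' - β₆ • h4)
  obtain ⟨e31, e32, e33⟩ := coords (α₇ * α₁ + β₇ * α₂) (α₇ * β₁ - α₃) (β₇ * β₂ - β₃)
    (by linear_combination (norm := module) α₇ • h2 + β₇ • h4 + h5' - h5)
  have : 2 * (β₁ * β₂ * β₅ * β₇ * α₂) = 0 := by
    linear_combination β₁ * β₂ * β₅ * e31 - β₁ * α₂ * (-β₅ * e33 + e13 - e23) - β₁ * β₂ * e21
      + β₂ * α₁ * e12 - β₂ * α₁ * β₅ * e32
  simp [hchar, hβ₁, hβ₂, hβ₅, hβ₇, hα₂] at this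

theorem not_isRegularRep_of_hasFanoMinorRep {W V : Type} [Fintype V] {cols : W → V → ZMod 2}
    (h : HasFanoMinorRep cols) : ¬ IsRegularRep cols := by
  obtain ⟨C, e, he, heC, hfano⟩ := h
  intro hreg
  obtain ⟨c, hc⟩ := hreg ℚ
  exact not_forall_linearIndepOn_iff_fanoCol (K := ℚ) two_ne_zero _ fun S =>
    (linearIndepOn_mkQ_comp_iff_of_forall_linearIndepOn_iff hc he heC S).trans (hfano S).symm

end Fano

theorem span_image_single_compl_range_eq_ker_funLeft {R U V : Type*} [Semiring R] [Fintype V]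
    [DecidableEq V] (m : U → V) :
    span R ((fun v => Pi.single v (1 : R)) '' (Set.range m)ᶜ) =
      LinearMap.ker (LinearMap.funLeft R R m) := by
  refine le_antisymm (span_le.2 ?_) fun f hf => ?_
  · rintro _ ⟨v, hv, rfl⟩
    ext u
    have huv : m u ≠ v := fun h => hv ⟨u, h⟩
    simp [huv]
  · rw [← Finset.univ_sum_single f]
    refine sum_mem fun v _ => ?_
    by_cases hv : v ∈ Set.range m
    · obtain ⟨u, rfl⟩ := hv
      simp [show f (m u) = 0 from congrFun hf u]
    · have hsmul : Pi.single v (f v) = f v • Pi.single v (1 : R) := by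
        ext w
        simp [Pi.single_apply]
      rw [hsmul]
      exact smul_mem _ _ (subset_span ⟨v, hv, rfl⟩)

section IsotropicMatroid

open Relation SimpleGraph

variable {V : Type} {A : Matrix V V (ZMod 2)}

def adjGraph (hA : A.IsSymm) : SimpleGraph V where
  Adj := GAdj A
  symm := ⟨fun v w h => ⟨h.1.symm, (hA.apply v w).trans h.2⟩⟩
  loopless := ⟨fun _ h => h.1 rfl⟩

theorem setOf_reflTransGen_gAdj (hA : A.IsSymm) (v : V) :
    {w | ReflTransGen (GAdj A) v w} =
      (adjGraph hA).connectedComponentMk ⁻¹' {(adjGraph hA).connectedComponentMk v} := by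
  ext w
  show ReflTransGen _ v w ↔ _ = _
  rw [ConnectedComponent.eq, reachable_comm, reachable_iff_reflTransGen]
  rfl

variable [DecidableEq V]

theorem connectedComponentMk_eq_of_iasCol_ne_zero (hA : A.IsSymm) {p : V × GType} {w : V}
    (h : iasCol A p w ≠ 0) :
    (adjGraph hA).connectedComponentMk w = (adjGraph hA).connectedComponentMk p.1 := by
  obtain ⟨v, t⟩ := p
  by_cases hwv : w = v
  · rw [hwv]
  · have hAwv : A w v ≠ 0 := by cases t <;> simp [iasCol, hwv] at h ⊢ <;> exact h
    exact ConnectedComponent.connectedComponentMk_eq_of_adj (G := adjGraph hA)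
      ⟨hwv, (ZMod.two_eq_zero_or_one _).resolve_left hAwv⟩

theorem isRegularRep_iasCol [Finite V] (hA : A.IsSymm)
    (hsmall : ∀ v : V, {w : V | ReflTransGen (GAdj A) v w}.ncard ≤ 2) :
    IsRegularRep (iasCol A) := by
  intro K _
  refine ⟨fun p w => ((iasCol A p w).val : K), fun S =>
    linearIndependent_natCast_val_iff K (adjGraph hA).connectedComponentMk (fun c => ?_)
      (fun p : S => (adjGraph hA).connectedComponentMk p.1.1) (fun p : S => iasCol A p)
      fun p w => connectedComponentMk_eq_of_iasCol_ne_zero hA⟩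
  induction c using ConnectedComponent.ind with
  | h v => rw [← setOf_reflTransGen_gAdj hA, Nat.card_coe_set_eq]; exact hsmall v

theorem iasCol_phi (v : V) : iasCol A (v, GType.phi) = Pi.single v 1 := by
  ext w
  simp [iasCol, Pi.single_apply]

theorem iasCol_comp {U : Type} [DecidableEq U] {m : U → V} (hm : Injective m) (u : U)
    (t : GType) : iasCol A (m u, t) ∘ m = iasCol (A.submatrix m m) (u, t) := by
  cases t <;> ext w <;> simp [iasCol, hm.eq_iff]

/-- `!![a, 1, t; 1, b, 1; t, 1, c]` is the submatrix of `A` on a path `x - y - z`. -/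
theorem iasCol_path_covers_fanoCol :
    ∀ a b c t : ZMod 2, ∀ i : Fin 7, ∃ p, iasCol !![a, 1, t; 1, b, 1; t, 1, c] p = fanoCol i := by
  decide

theorem hasFanoMinorRep_iasCol [Fintype V] (hA : A.IsSymm)
    (hbig : ∃ v : V, 3 ≤ {w : V | ReflTransGen (GAdj A) v w}.ncard) :
    HasFanoMinorRep (iasCol A) := by
  obtain ⟨v, hv⟩ := hbig
  rw [setOf_reflTransGen_gAdj hA] at hv
  obtain ⟨x, y, z, hxz, hxy, hyz⟩ := exists_adj_adj_of_three_le_ncard_supp hv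
  let m : Fin 3 → V := ![x, y, z]
  have hm : Injective m := by
    intro i j
    fin_cases i <;> fin_cases j <;> simp [m, hxy.1, hyz.1, hxz, hxy.1.symm, hyz.1.symm, hxz.symm]
  have hsub : A.submatrix m m = !![A x x, 1, A x z; 1, A y y, 1; A x z, 1, A z z] := by
    ext i j
    fin_cases i <;> fin_cases j <;>
      simp [m, hxy.2, hyz.2, hA.apply x y, hA.apply y z, hA.apply x z]
  choose p hp using iasCol_path_covers_fanoCol (A x x) (A y y) (A z z) (A x z)
  let e i : V × GType := (m (p i).1, (p i).2)
  have hqe : ∀ i, iasCol A (e i) ∘ m = fanoCol i := fun i => by rw [iasCol_comp hm, hsub, hp]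
  let C := (fun v => (v, GType.phi)) '' (Set.range m)ᶜ
  have hspan : span (ZMod 2) (iasCol A '' C) = LinearMap.ker (LinearMap.funLeft _ _ m) := by
    rw [Set.image_image, ← span_image_single_compl_range_eq_ker_funLeft]
    simp only [iasCol_phi]
  refine ⟨C, e, fun i j h => fanoCol_injective (by rw [← hqe, ← hqe, h]), ?_, fun S => ?_⟩
  · rintro i ⟨w, hw, hwi⟩
    exact hw ⟨(p i).1, (congrArg Prod.fst hwi).symm⟩
  · let restrict := (span (ZMod 2) (iasCol A '' C)).liftQ _ hspan.le
    have hfam : (fun i : S => fanoCol i) =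
        restrict ∘ fun i : S => (span (ZMod 2) (iasCol A '' C)).mkQ (iasCol A (e i)) :=
      funext fun i => (hqe i).symm
    rw [hfam]
    exact restrict.linearIndependent_iff (ker_liftQ_eq_bot' _ _ hspan)

end IsotropicMatroid

/-- if every connected component of `G` has at most two vertices then
`M(IAS(G))` is regular; and if some component has at least three vertices then
`M(IAS(G))` has a Fano minor and hence is not regular. -/
theorem isotropic_matroid_regular_iff {V : Type} [Fintype V] [DecidableEq V]
    (A : Matrix V V (ZMod 2)) (hA : A.IsSymm) :
    ((∀ v : V, {w : V | Relation.ReflTransGen (GAdj A) v w}.ncard ≤ 2) →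
      IsRegularRep (iasCol A)) ∧
    ((∃ v : V, 3 ≤ {w : V | Relation.ReflTransGen (GAdj A) v w}.ncard) →
      HasFanoMinorRep (iasCol A) ∧ ¬ IsRegularRep (iasCol A)) := by
  refine ⟨isRegularRep_iasCol hA, fun hbig => ?_⟩
  have hfano := hasFanoMinorRep_iasCol hA hbig
  exact ⟨hfano, not_isRegularRep_of_hasFanoMinorRep hfano⟩
end
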